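/- Fix integers m, d with 1 ≤ m ≤ d, k ≥ 2, and ε ∈ (0, 1/2). If F ⊆ ℝ^d does not contain any (k, ε, v)-AP for some set v of m orthogonal unit vectors, then dim_A F ≤ d + (1/2)·log(r_{k,m}(⌈√d/ε⌉)/⌈√d/ε⌉^m) / log⌈√d/ε⌉. -/

import Mathlib

open scoped Classical
open Filter

noncomputable section

/-- The grid `{1,...,N}^d`. -/
def apGrid (d N : ℕ) : Finset (Fin d → ℕ) := Fintype.piFinset fun _ => Finset.Icc 1 N

/-- `A ⊆ ℕ^d` contains an arithmetic patch of size `k` with orientation `{e_1,...,e_m}`: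
there are `t` and a scale `Δ > 0` such that all points `t + Δ·Σ x_i e_i`, `x_i ∈ {0,...,k-1}`,
lie in `A`. -/
def HasPatchNat (d m k : ℕ) (A : Set (Fin d → ℕ)) : Prop :=
  ∃ t : Fin d → ℕ, ∃ Δ : ℕ, 0 < Δ ∧
    ∀ x : Fin m → Fin k,
      (fun i : Fin d => t i + Δ * (if h : (i : ℕ) < m then (x ⟨i, h⟩ : ℕ) else 0)) ∈ A

/-- `rPatch k d m N` = largest cardinality of a subset of `{1,...,N}^d` containing no
arithmetic patch of size `k` with orientation `{e_1,...,e_m}`. -/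
def rPatch (k d m N : ℕ) : ℕ :=
  ((apGrid d N).powerset.filter
    (fun A : Finset (Fin d → ℕ) => ¬ HasPatchNat d m k (↑A : Set (Fin d → ℕ)))).sup Finset.card

/-- The `i`-th standard basis vector of `ℝ^d` (as `EuclideanSpace`), indexed by `i : ℕ`. -/
def stdVec (d : ℕ) (i : ℕ) : EuclideanSpace ℝ (Fin d) :=
  (EuclideanSpace.equiv (Fin d) ℝ).symm fun j : Fin d => if (j : ℕ) = i then (1 : ℝ) else 0

/-- `Q ⊆ ℝ^d` contains a `(k, ε, v)`-AP: there is an arithmetic patch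
`P = {t + Δ·Σ x_i v_i : x_i ∈ {0,...,k-1}}` of scale `Δ > 0` such that every point of `P`
is within distance `ε·Δ` of `Q` (i.e. `inf_{y ∈ Q} ‖x - y‖ ≤ ε Δ` for all `x ∈ P`). -/
def ContainsAP (d m k : ℕ) (ε : ℝ) (v : Fin m → EuclideanSpace ℝ (Fin d))
    (Q : Set (EuclideanSpace ℝ (Fin d))) : Prop :=
  ∃ t : EuclideanSpace ℝ (Fin d), ∃ Δ : ℝ, 0 < Δ ∧
    ∀ x : Fin m → Fin k,
      Metric.infDist (t + Δ • ∑ i, ((x i : ℕ) : ℝ) • v i) Q ≤ ε * Δ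

/-- Smallest cardinality of a family of sets of diameter at most `r` covering `E`. -/
def coverNum {X : Type*} [MetricSpace X] (E : Set X) (r : ℝ) : ℕ :=
  sInf {n : ℕ | ∃ U : Finset (Set X), U.card = n ∧
    (∀ s ∈ U, Metric.diam s ≤ r) ∧ E ⊆ ⋃₀ (↑U : Set (Set X))}

/-- The Assouad dimension of a set in a metric space. -/
def assouadDim {X : Type*} [MetricSpace X] (F : Set X) : ℝ :=
  sInf {σ : ℝ | 0 ≤ σ ∧ ∃ C : ℝ, 0 < C ∧
    ∀ x ∈ F, ∀ r : ℝ, 0 < r → ∀ R : ℝ, r < R →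
      (coverNum (Metric.closedBall x R ∩ F) r : ℝ) ≤ C * (R / r) ^ σ}

/-!
In the coordinates of an orthonormal basis extending `v` the forbidden patches become axis-parallel.
Cut space into cubes of side `δ`: the corner of an occupied cube is within `√d δ ≤ ε N δ` of `F`,
so the occupied cubes contain no arithmetic patch of step `N Δ` in the first `m` directions, as
such a patch of corners would be a `(k, ε, v)`-AP. The `N^{2d}` subcubes of a cube of side `N² δ`
split into `N^{2d-m}` copies of `{1,…,N}^m` dilated by `N`, each holding at most `r_{k,m}(N)`
occupied subcubes. So every refinement by the factor `N²` multiplies the number of occupied cubes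
by at most `K = r_{k,m}(N) N^{2d-m} = (N²)^σ`, and a ball of radius `R` meets at most
`K^p ≲ (R / r)^σ` cubes of diameter `r`.
-/

open Finset Metric

lemma card_le_rPatch {k d m N : ℕ} {A : Finset (Fin d → ℕ)} (hA : A ⊆ apGrid d N)
    (hP : ¬ HasPatchNat d m k (↑A : Set (Fin d → ℕ))) : #A ≤ rPatch k d m N :=
  le_sup (f := card) (mem_filter.2 ⟨mem_powerset.2 hA, hP⟩)

lemma one_le_rPatch {k m N : ℕ} (hm : 1 ≤ m) (hk : 2 ≤ k) (hN : 1 ≤ N) :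
    1 ≤ rPatch k m m N := by
  refine card_singleton (fun _ => 1 : Fin m → ℕ) ▸ card_le_rPatch ?_ ?_
  · simpa [apGrid, Fintype.mem_piFinset] using fun _ => hN
  · rintro ⟨t, Δ, hΔ, hpt⟩
    have h0 := hpt fun _ => ⟨0, by omega⟩
    have h1 := hpt fun _ => ⟨1, by omega⟩
    simp only [coe_singleton, Set.mem_singleton_iff, funext_iff] at h0 h1
    have := (h0 ⟨0, hm⟩).trans (h1 ⟨0, hm⟩).symm
    simp only [dite_eq_ite, ite_self, mul_zero, add_zero, mul_ite, mul_one, Nat.left_eq_add,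
      ite_eq_right_iff] at this
    omega

lemma HasPatchNat.mono {d m k : ℕ} {A B : Set (Fin d → ℕ)} (hAB : A ⊆ B)
    (h : HasPatchNat d m k A) : HasPatchNat d m k B :=
  let ⟨t, Δ, hΔ, ht⟩ := h
  ⟨t, Δ, hΔ, fun x => hAB (ht x)⟩

section Cells

variable {d : ℕ}

def cellBox (d L : ℕ) (Y : Fin d → ℤ) : Finset (Fin d → ℤ) :=
  Fintype.piFinset fun i => Ico (L * Y i) (L * Y i + L)

lemma mem_cellBox {L : ℕ} (hL : 0 < L) {Y y : Fin d → ℤ} :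
    y ∈ cellBox d L Y ↔ ∀ i, y i / L = Y i := by
  have hL' : (0 : ℤ) < L := by exact_mod_cast hL
  simp only [cellBox, Fintype.mem_piFinset, mem_Ico]
  refine forall_congr' fun i => ⟨fun ⟨h1, h2⟩ => ?_, fun h => ?_⟩
  · exact le_antisymm (Int.lt_add_one_iff.1 ((Int.ediv_lt_iff_lt_mul hL').2 (by linarith)))
      ((Int.le_ediv_iff_mul_le hL').2 (by linarith))
  · rw [← h]
    exact ⟨Int.mul_ediv_self_le hL'.ne', Int.lt_mul_ediv_self_add hL'⟩

def gridEmbed (m N : ℕ) (ρ : Fin d → ℤ) (q : Fin m → ℕ) : Fin d → ℤ :=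
  fun i => ρ i + N * if h : (i : ℕ) < m then (q ⟨i, h⟩ : ℤ) else 0

lemma gridEmbed_add {m N : ℕ} (ρ : Fin d → ℤ) (q q' : Fin m → ℕ) :
    gridEmbed m N ρ (q + q') = gridEmbed m N (gridEmbed m N ρ q) q' := by
  ext i
  simp only [gridEmbed, Pi.add_apply]
  split_ifs <;> push_cast <;> ring

def HasStepPatch (m k N : ℕ) (A : Set (Fin d → ℤ)) : Prop :=
  ∃ t : Fin d → ℤ, ∃ Δ : ℕ, 0 < Δ ∧ ∀ x : Fin m → Fin k, gridEmbed m N t (fun i => Δ * x i) ∈ A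

lemma not_hasPatchNat_preimage_gridEmbed {m k N : ℕ} {A : Set (Fin d → ℤ)}
    (hA : ¬ HasStepPatch m k N A) (ρ : Fin d → ℤ) :
    ¬ HasPatchNat m m k {q | gridEmbed m N ρ q ∈ A} := by
  rintro ⟨t, Δ, hΔ, ht⟩
  refine hA ⟨gridEmbed m N ρ t, Δ, hΔ, fun x => ?_⟩
  have hx : (t + fun i => Δ * (x i : ℕ)) =
      fun i => t i + Δ * if h : (i : ℕ) < m then (x ⟨i, h⟩ : ℕ) else 0 := by
    ext i
    simp
  rw [← gridEmbed_add, hx]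
  exact ht x

/- The shift by `-N` on the first `m` coordinates matches the grid `{1,…,N}^m` of `rPatch`:
every point of `cellBox d (N ^ 2) Y` is `gridEmbed m N ρ q` with `ρ` here and `q ∈ apGrid m N`. -/
def cellResidues (m N : ℕ) (Y : Fin d → ℤ) : Finset (Fin d → ℤ) :=
  Fintype.piFinset fun i => if (i : ℕ) < m then Ico ((N : ℤ) ^ 2 * Y i - N) (N ^ 2 * Y i)
    else Ico ((N : ℤ) ^ 2 * Y i) (N ^ 2 * Y i + N ^ 2)

lemma card_cellResidues {m N : ℕ} (hmd : m ≤ d) (Y : Fin d → ℤ) :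
    #(cellResidues m N Y) = N ^ (2 * d - m) := by
  rw [cellResidues, Fintype.card_piFinset]
  have hcard : ∀ i : Fin d, #(if (i : ℕ) < m then Ico ((N : ℤ) ^ 2 * Y i - N) (N ^ 2 * Y i)
      else Ico ((N : ℤ) ^ 2 * Y i) (N ^ 2 * Y i + N ^ 2)) = if (i : ℕ) < m then N else N ^ 2 := by
    intro i
    split_ifs
    · simp [Int.card_Ico]
    · simp [Int.card_Ico]
      norm_cast
  rw [prod_congr rfl fun i _ => hcard i,
    Fin.prod_univ_eq_prod_range (fun i => if i < m then N else N ^ 2), ← Nat.add_sub_cancel' hmd,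
    prod_range_add, prod_congr rfl fun i hi => if_pos (mem_range.1 hi),
    prod_congr rfl fun i _ => if_neg (by omega : ¬ m + i < m)]
  simp only [prod_const, card_range, ← pow_mul, ← pow_add]
  congr 1
  omega

lemma exists_gridEmbed_eq_of_mem_cellBox {m N : ℕ} (hmd : m ≤ d) (hN : 0 < N) {Y y : Fin d → ℤ}
    (hy : y ∈ cellBox d (N ^ 2) Y) :
    ∃ ρ ∈ cellResidues m N Y, ∃ q ∈ apGrid m N, gridEmbed m N ρ q = y := by
  have hN' : (0 : ℤ) < N := by exact_mod_cast hN
  set c : Fin d → ℤ := fun i => (y i - N ^ 2 * Y i) / N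
  have hyY : ∀ i, N ^ 2 * Y i ≤ y i ∧ y i < N ^ 2 * Y i + N ^ 2 := fun i => by
    simpa using Fintype.mem_piFinset.1 hy i
  have hc : ∀ i, 0 ≤ c i ∧ c i < N ∧
      N * c i ≤ y i - N ^ 2 * Y i ∧ y i - N ^ 2 * Y i < N * c i + N := by
    intro i
    have hyi := hyY i
    refine ⟨Int.ediv_nonneg (by linarith) hN'.le, Int.ediv_lt_of_lt_mul hN' (by nlinarith),
      Int.mul_ediv_self_le hN'.ne', Int.lt_mul_ediv_self_add hN'⟩
  refine ⟨fun i => if (i : ℕ) < m then y i - N * (c i + 1) else y i, ?_,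
    fun j => (c (Fin.castLE hmd j) + 1).toNat, ?_, ?_⟩
  · refine Fintype.mem_piFinset.2 fun i => ?_
    obtain ⟨-, -, h1, h2⟩ := hc i
    have := hyY i
    split_ifs <;> simp only [mem_Ico] <;> constructor <;> linarith
  · refine Fintype.mem_piFinset.2 fun j => ?_
    obtain ⟨h1, h2, -, -⟩ := hc (Fin.castLE hmd j)
    simp only [mem_Icc]
    omega
  · ext i
    simp only [gridEmbed]
    split_ifs with h
    · have := (hc i).1
      simp only [Fin.castLE_mk, Int.toNat_of_nonneg (by omega : 0 ≤ c i + 1)]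
      ring
    · ring

lemma card_cellBox_filter_le_of_not_hasStepPatch {m k N : ℕ} (hmd : m ≤ d) (hN : 0 < N)
    {A : Set (Fin d → ℤ)} (hA : ¬ HasStepPatch m k N A) (Y : Fin d → ℤ) :
    #{y ∈ cellBox d (N ^ 2) Y | y ∈ A} ≤ rPatch k m m N * N ^ (2 * d - m) := by
  calc #{y ∈ cellBox d (N ^ 2) Y | y ∈ A}
      ≤ #((cellResidues m N Y).biUnion fun ρ =>
          {q ∈ apGrid m N | gridEmbed m N ρ q ∈ A}.image (gridEmbed m N ρ)) := by
        refine card_le_card fun y hy => ?_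
        obtain ⟨hyY, hyA⟩ := mem_filter.1 hy
        obtain ⟨ρ, hρ, q, hq, rfl⟩ := exists_gridEmbed_eq_of_mem_cellBox hmd hN hyY
        exact mem_biUnion.2 ⟨ρ, hρ, mem_image_of_mem _ (mem_filter.2 ⟨hq, hyA⟩)⟩
    _ ≤ ∑ ρ ∈ cellResidues m N Y, #{q ∈ apGrid m N | gridEmbed m N ρ q ∈ A} :=
        card_biUnion_le.trans (sum_le_sum fun _ _ => card_image_le)
    _ ≤ #(cellResidues m N Y) • rPatch k m m N :=
        sum_le_card_nsmul _ _ _ fun ρ _ => card_le_rPatch (filter_subset _ _)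
          fun h => not_hasPatchNat_preimage_gridEmbed hA ρ (h.mono fun q hq => (mem_filter.1 hq).2)
    _ = rPatch k m m N * N ^ (2 * d - m) := by rw [card_cellResidues hmd, smul_eq_mul, mul_comm]

end Cells

section Grid

variable {d : ℕ}

def gridCell (a : Fin d → ℝ) (δ : ℝ) (z : EuclideanSpace ℝ (Fin d)) : Fin d → ℤ :=
  fun i => ⌊(z i - a i) / δ⌋

def cellCorner (a : Fin d → ℝ) (δ : ℝ) (y : Fin d → ℤ) : EuclideanSpace ℝ (Fin d) :=
  WithLp.toLp 2 fun i => a i + δ * y i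

lemma gridCell_natCast_mul (a : Fin d → ℝ) (L : ℕ) (δ : ℝ) (z : EuclideanSpace ℝ (Fin d))
    (i : Fin d) : gridCell a (L * δ) z i = gridCell a δ z i / L := by
  rw [gridCell, gridCell, ← Int.floor_div_natCast, div_div, mul_comm δ]

lemma card_cellBox_pow_filter_le_pow {Q : Set (EuclideanSpace ℝ (Fin d))} {a : Fin d → ℝ}
    {X K : ℕ} (hX : 0 < X)
    (hK : ∀ δ : ℝ, 0 < δ → ∀ Y, #{y ∈ cellBox d X Y | y ∈ gridCell a δ '' Q} ≤ K)
    {δ : ℝ} (hδ : 0 < δ) :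
    ∀ (p : ℕ) (Y : Fin d → ℤ), #{y ∈ cellBox d (X ^ p) Y | y ∈ gridCell a δ '' Q} ≤ K ^ p
  | 0, Y => (card_filter_le _ _).trans (by simp [cellBox, Fintype.card_piFinset])
  | p + 1, Y => by
    have hXp : 0 < X ^ p := pow_pos hX p
    rw [pow_succ, pow_succ]
    refine (card_le_mul_card_image_of_maps_to
      (f := fun (y : Fin d → ℤ) i => y i / ((X ^ p : ℕ) : ℤ))
      (t := {Y' ∈ cellBox d X Y | Y' ∈ gridCell a ((X ^ p : ℕ) * δ) '' Q}) ?_ _ ?_).trans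
      (Nat.mul_le_mul_left _ (hK _ (by positivity) Y))
    · intro y hy
      obtain ⟨hyY, z, hzQ, rfl⟩ := mem_filter.1 hy
      refine mem_filter.2 ⟨(mem_cellBox hX).2 fun i => ?_, z, hzQ, funext fun i => ?_⟩
      · rw [Int.ediv_ediv_of_nonneg (by positivity), ← Nat.cast_mul]
        exact (mem_cellBox (mul_pos hXp hX)).1 hyY i
      · exact gridCell_natCast_mul a _ δ z i
    · intro Y' _
      refine (card_le_card fun y hy => ?_).trans (card_cellBox_pow_filter_le_pow hX hK hδ p Y')
      obtain ⟨hys, rfl⟩ := mem_filter.1 hy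
      exact mem_filter.2 ⟨(mem_cellBox hXp).2 fun i => rfl, (mem_filter.1 hys).2⟩

lemma gridCell_mem_cellBox_zero {x z : EuclideanSpace ℝ (Fin d)} {R δ : ℝ} {L : ℕ} (hL : 0 < L)
    (hδ : 0 < δ) (hz : z ∈ closedBall x R) (hLδ : 2 * R < L * δ) :
    gridCell (fun i => x i - R) δ z ∈ cellBox d L 0 := by
  refine (mem_cellBox hL).2 fun i => ?_
  rw [← gridCell_natCast_mul, Pi.zero_apply, gridCell, Int.floor_eq_zero_iff]
  have hzi := abs_le.1 (Real.dist_eq _ _ ▸ (PiLp.dist_apply_le z x i).trans (mem_closedBall.1 hz))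
  constructor
  · exact div_nonneg (by linarith) (by positivity)
  · rw [div_lt_one (by positivity)]
    linarith

lemma dist_le_sqrt_mul_of_abs_sub_le {z w : EuclideanSpace ℝ (Fin d)} {δ : ℝ} (hδ : 0 ≤ δ)
    (h : ∀ i, |z i - w i| ≤ δ) : dist z w ≤ √d * δ :=
  calc dist z w = √(∑ i, dist (z i) (w i) ^ 2) := EuclideanSpace.dist_eq z w
    _ ≤ √(∑ _i : Fin d, δ ^ 2) := Real.sqrt_le_sqrt (sum_le_sum fun i _ => by
      rw [Real.dist_eq]
      exact pow_le_pow_left₀ (abs_nonneg _) (h i) 2)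
    _ = √d * δ := by
      rw [sum_const, card_univ, Fintype.card_fin, nsmul_eq_mul, Real.sqrt_mul (Nat.cast_nonneg d),
        Real.sqrt_sq hδ]

lemma dist_cellCorner_gridCell_le (a : Fin d → ℝ) {δ : ℝ} (hδ : 0 < δ)
    (z : EuclideanSpace ℝ (Fin d)) : dist (cellCorner a δ (gridCell a δ z)) z ≤ √d * δ := by
  refine dist_le_sqrt_mul_of_abs_sub_le hδ.le fun i => ?_
  have h1 := (le_div_iff₀ hδ).1 (Int.floor_le ((z i - a i) / δ))
  have h2 := (div_lt_iff₀ hδ).1 (Int.lt_floor_add_one ((z i - a i) / δ))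
  simp only [cellCorner, gridCell, PiLp.toLp_apply]
  rw [abs_le]
  constructor <;> nlinarith

lemma diam_gridCell_preimage_le (a : Fin d → ℝ) {δ : ℝ} (hδ : 0 < δ) (y : Fin d → ℤ) :
    diam (gridCell a δ ⁻¹' {y}) ≤ √d * δ := by
  refine diam_le_of_forall_dist_le (by positivity) fun z hz w hw =>
    dist_le_sqrt_mul_of_abs_sub_le hδ.le fun i => ?_
  have h := Int.abs_sub_lt_one_of_floor_eq_floor (congrFun (hz.trans hw.symm) i)
  rw [← sub_div, sub_sub_sub_cancel_right, abs_div, abs_of_pos hδ, div_lt_one hδ] at h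
  exact h.le

lemma sum_smul_stdVec_apply {m : ℕ} (c : Fin m → ℝ) (j : Fin d) :
    (∑ i, c i • stdVec d i) j = if h : (j : ℕ) < m then c ⟨j, h⟩ else 0 := by
  simp only [stdVec, PiLp.continuousLinearEquiv_symm_apply, WithLp.ofLp_sum, WithLp.ofLp_smul,
    Finset.sum_apply, Pi.smul_apply, smul_eq_mul, mul_ite, mul_one, mul_zero]
  split_ifs with h
  · rw [sum_eq_single_of_mem ⟨j, h⟩ (mem_univ _) fun i _ hi => if_neg fun e => hi (Fin.ext e).symm]
    exact if_pos rfl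
  · exact sum_eq_zero fun i _ => if_neg fun e : (j : ℕ) = i => h (e ▸ i.2)

lemma cellCorner_gridEmbed {m N : ℕ} (a : Fin d → ℝ) (δ : ℝ) (t : Fin d → ℤ) (q : Fin m → ℕ) :
    cellCorner a δ (gridEmbed m N t q) =
      cellCorner a δ t + (N * δ) • ∑ i, (q i : ℝ) • stdVec d i := by
  ext j
  simp only [cellCorner, gridEmbed, PiLp.add_apply, PiLp.smul_apply, sum_smul_stdVec_apply,
    PiLp.toLp_apply, smul_eq_mul]
  split_ifs <;> push_cast <;> ring

lemma not_hasStepPatch_image_gridCell {m k N : ℕ} {ε : ℝ} {Q : Set (EuclideanSpace ℝ (Fin d))}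
    (hQ : ¬ ContainsAP d m k ε (fun i => stdVec d i) Q) (hN : 0 < N) (hNε : √d ≤ ε * N)
    (a : Fin d → ℝ) {δ : ℝ} (hδ : 0 < δ) : ¬ HasStepPatch m k N (gridCell a δ '' Q) := by
  rintro ⟨t, Δ, hΔ, ht⟩
  choose z hzQ hz using ht
  refine hQ ⟨cellCorner a δ t, N * Δ * δ, by positivity, fun x => ?_⟩
  have hcorner : cellCorner a δ t + (N * Δ * δ) • ∑ i, ((x i : ℕ) : ℝ) • stdVec d i =
      cellCorner a δ (gridCell a δ (z x)) := by
    rw [hz, cellCorner_gridEmbed, smul_sum, smul_sum]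
    refine congrArg _ (sum_congr rfl fun i _ => ?_)
    rw [smul_smul, smul_smul]
    congr 1
    push_cast
    ring
  have hΔ' : (1 : ℝ) ≤ Δ := by exact_mod_cast hΔ
  have hεN : 0 ≤ ε * N := (Real.sqrt_nonneg _).trans hNε
  calc infDist _ Q ≤ dist (cellCorner a δ (gridCell a δ (z x))) (z x) :=
        hcorner ▸ infDist_le_dist_of_mem (hzQ x)
    _ ≤ √d * δ := dist_cellCorner_gridCell_le a hδ _
    _ ≤ ε * N * δ := mul_le_mul_of_nonneg_right hNε hδ.le
    _ ≤ ε * (N * Δ * δ) := by nlinarith [mul_nonneg (mul_nonneg hεN hδ.le) (sub_nonneg.2 hΔ')]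

end Grid

section Covering

variable {X Y : Type*} [MetricSpace X] [MetricSpace Y]

lemma coverNum_le_card {E : Set X} {r : ℝ} {U : Finset (Set X)} (hU : ∀ s ∈ U, diam s ≤ r)
    (hE : E ⊆ ⋃₀ (U : Set (Set X))) : coverNum E r ≤ #U :=
  Nat.sInf_le ⟨U, rfl, hU, hE⟩

lemma exists_cover_of_image (φ : X ≃ᵢ Y) {E : Set X} {r : ℝ} {n : ℕ}
    (h : ∃ U : Finset (Set Y), #U = n ∧ (∀ s ∈ U, diam s ≤ r) ∧ φ '' E ⊆ ⋃₀ (U : Set (Set Y))) :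
    ∃ U : Finset (Set X), #U = n ∧ (∀ s ∈ U, diam s ≤ r) ∧ E ⊆ ⋃₀ (U : Set (Set X)) := by
  obtain ⟨U, rfl, hU, hE⟩ := h
  refine ⟨U.image (φ ⁻¹' ·), card_image_of_injective _ (Set.preimage_injective.2 φ.surjective),
    ?_, fun z hz => ?_⟩
  · simp only [mem_image]
    rintro _ ⟨s, hs, rfl⟩
    rw [φ.diam_preimage]
    exact hU s hs
  · obtain ⟨s, hs, hzs⟩ := hE (Set.mem_image_of_mem φ hz)
    exact ⟨φ ⁻¹' s, mem_image_of_mem _ hs, hzs⟩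

lemma coverNum_image (φ : X ≃ᵢ Y) (E : Set X) (r : ℝ) : coverNum (φ '' E) r = coverNum E r := by
  refine congrArg sInf (Set.ext fun n => ⟨exists_cover_of_image φ, fun h => ?_⟩)
  refine exists_cover_of_image φ.symm ?_
  rwa [← Set.image_comp, φ.symm_comp_self, Set.image_id]

lemma assouadDim_le_of_coverNum_le_pow {F : Set X} {b c : ℝ} {K : ℕ} (hb : 1 < b) (hc : 1 ≤ c)
    (hK : 1 ≤ K)
    (hcover : ∀ x ∈ F, ∀ r : ℝ, 0 < r → ∀ R : ℝ, ∀ p : ℕ, c * R < b ^ p * r →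
      coverNum (closedBall x R ∩ F) r ≤ K ^ p) :
    assouadDim F ≤ Real.logb b K := by
  have hK' : (1 : ℝ) ≤ K := by exact_mod_cast hK
  have hσ : 0 ≤ Real.logb b K := Real.logb_nonneg hb hK'
  refine csInf_le ⟨0, fun σ hσ => hσ.1⟩ ⟨hσ, (b * c) ^ Real.logb b K, by positivity,
    fun x hx r hr R hrR => ?_⟩
  have hcR : 1 ≤ c * R / r := by
    rw [le_div_iff₀ hr]
    nlinarith
  obtain ⟨n, hn, hn'⟩ := exists_nat_pow_near hcR hb
  have hbn : b ^ (n + 1) ≤ b * (c * R / r) := by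
    rw [pow_succ']
    exact mul_le_mul_of_nonneg_left hn (by positivity)
  calc (coverNum (closedBall x R ∩ F) r : ℝ) ≤ (K : ℝ) ^ (n + 1) := by
        exact_mod_cast hcover x hx r hr R (n + 1) ((div_lt_iff₀ hr).1 hn')
    _ = (b ^ (n + 1)) ^ Real.logb b K := by
        rw [← Real.rpow_pow_comm (by positivity),
          Real.rpow_logb (by positivity) hb.ne' (by positivity)]
    _ ≤ (b * (c * R / r)) ^ Real.logb b K := Real.rpow_le_rpow (by positivity) hbn hσ
    _ = (b * c) ^ Real.logb b K * (R / r) ^ Real.logb b K := by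
        rw [← Real.mul_rpow (by positivity) (div_pos (hr.trans hrR) hr).le, mul_div_assoc,
          mul_assoc]

end Covering

lemma coverNum_closedBall_inter_le_pow {d m k N : ℕ} (hd : 0 < d) (hmd : m ≤ d) (hN : 0 < N) {ε : ℝ}
    (hNε : √d ≤ ε * N) {Q : Set (EuclideanSpace ℝ (Fin d))}
    (hQ : ¬ ContainsAP d m k ε (fun i => stdVec d i) Q) (x : EuclideanSpace ℝ (Fin d))
    {r R : ℝ} (hr : 0 < r) {p : ℕ} (hp : 2 * √d * R < ((N : ℝ) ^ 2) ^ p * r) :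
    coverNum (closedBall x R ∩ Q) r ≤ (rPatch k m m N * N ^ (2 * d - m)) ^ p := by
  set a : Fin d → ℝ := fun i => x i - R
  have hsd : 0 < √d := Real.sqrt_pos.2 (by exact_mod_cast hd)
  set δ := r / √d
  have hδ : 0 < δ := div_pos hr hsd
  set occupied := {y ∈ cellBox d ((N ^ 2) ^ p) 0 | y ∈ gridCell a δ '' Q}
  have hblock : ∀ δ' : ℝ, 0 < δ' → ∀ Y, #{y ∈ cellBox d (N ^ 2) Y | y ∈ gridCell a δ' '' Q} ≤
      rPatch k m m N * N ^ (2 * d - m) := fun δ' hδ' =>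
    card_cellBox_filter_le_of_not_hasStepPatch hmd hN
      (not_hasStepPatch_image_gridCell hQ hN hNε a hδ')
  have hcount : #occupied ≤ (rPatch k m m N * N ^ (2 * d - m)) ^ p :=
    card_cellBox_pow_filter_le_pow (pow_pos hN 2) hblock hδ p 0
  refine (coverNum_le_card (U := occupied.image fun y => gridCell a δ ⁻¹' {y}) ?_ ?_).trans
    (card_image_le.trans hcount)
  · simp only [mem_image]
    rintro _ ⟨y, -, rfl⟩
    exact (diam_gridCell_preimage_le a hδ y).trans_eq (mul_div_cancel₀ r hsd.ne')
  · have hLδ : 2 * R < ((N ^ 2) ^ p : ℕ) * δ := by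
      rw [mul_div_assoc', lt_div_iff₀ hsd]
      push_cast
      linarith
    rintro z ⟨hzx, hzQ⟩
    exact Set.mem_sUnion.2 ⟨_, mem_image_of_mem _ (mem_filter.2
      ⟨gridCell_mem_cellBox_zero (by positivity) hδ hzx hLδ, z, hzQ, rfl⟩), rfl⟩

lemma Orthonormal.exists_orthonormalBasis_castLE {E : Type*} [NormedAddCommGroup E]
    [InnerProductSpace ℝ E] [FiniteDimensional ℝ E] {d m : ℕ} (hE : Module.finrank ℝ E = d)
    {v : Fin m → E} (hv : Orthonormal ℝ v) (hmd : m ≤ d) :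
    ∃ b : OrthonormalBasis (Fin d) ℝ E, ∀ i, b (Fin.castLE hmd i) = v i := by
  set w : Fin d → E := fun j => if h : (j : ℕ) < m then v ⟨j, h⟩ else 0
  have hw : Orthonormal ℝ ({j : Fin d | (j : ℕ) < m}.domRestrict w) := by
    have : {j : Fin d | (j : ℕ) < m}.domRestrict w = v ∘ fun j => ⟨j.1, j.2⟩ :=
      funext fun j => dif_pos j.2
    rw [this]
    exact hv.comp _ fun i j hij => Subtype.ext (Fin.ext (Fin.mk.inj hij))
  obtain ⟨b, hb⟩ := hw.exists_orthonormalBasis_extension_of_card_eq (by simpa using hE)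
  exact ⟨b, fun i => (hb _ i.2).trans (dif_pos i.2)⟩

lemma stdVec_eq_single {d : ℕ} (j : Fin d) : stdVec d j = EuclideanSpace.single j 1 := by
  ext i
  simp [stdVec, Fin.val_inj]

lemma ContainsAP.of_image {d m k : ℕ} {ε : ℝ} {v : Fin m → EuclideanSpace ℝ (Fin d)}
    {Q : Set (EuclideanSpace ℝ (Fin d))}
    (φ : EuclideanSpace ℝ (Fin d) ≃ₗᵢ[ℝ] EuclideanSpace ℝ (Fin d))
    (h : ContainsAP d m k ε (fun i => φ (v i)) (φ '' Q)) : ContainsAP d m k ε v Q := by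
  obtain ⟨t, Δ, hΔ, ht⟩ := h
  refine ⟨φ.symm t, Δ, hΔ, fun x => ?_⟩
  rw [← infDist_image φ.isometry]
  simpa [map_add, map_smul, map_sum] using ht x

lemma exists_orthonormalBasis_not_containsAP_stdVec {d m k : ℕ} {ε : ℝ}
    {v : Fin m → EuclideanSpace ℝ (Fin d)} {F : Set (EuclideanSpace ℝ (Fin d))}
    (hv : Orthonormal ℝ v) (hmd : m ≤ d) (hF : ¬ ContainsAP d m k ε v F) :
    ∃ b : OrthonormalBasis (Fin d) ℝ (EuclideanSpace ℝ (Fin d)),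
      ¬ ContainsAP d m k ε (fun i => stdVec d i) (b.repr '' F) := by
  obtain ⟨b, hb⟩ := hv.exists_orthonormalBasis_castLE finrank_euclideanSpace_fin hmd
  refine ⟨b, fun h => hF (ContainsAP.of_image b.repr ?_)⟩
  simpa only [← hb, b.repr_self, ← stdVec_eq_single, Fin.val_castLE] using h

lemma logb_sq_mul_pow_eq {N A : ℝ} (hN : 1 < N) (hA : 0 < A) {d m : ℕ} (hmd : m ≤ 2 * d) :
    Real.logb (N ^ 2) (A * N ^ (2 * d - m)) = d + 1 / 2 * (Real.log (A / N ^ m) / Real.log N) := by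
  have hlogN : 0 < Real.log N := Real.log_pos hN
  rw [Real.logb, Real.log_mul hA.ne' (by positivity), Real.log_div hA.ne' (by positivity),
    Real.log_pow, Real.log_pow, Real.log_pow, Nat.cast_sub hmd]
  field_simp
  push_cast
  ring

theorem assouad_upper_bound_special (k d m : ℕ) (hm : 1 ≤ m) (hmd : m ≤ d) (hk : 2 ≤ k)
    (ε : ℝ) (hε : 0 < ε) (hε' : ε < 1/2)
    (F : Set (EuclideanSpace ℝ (Fin d)))
    (hF : ∃ v : Fin m → EuclideanSpace ℝ (Fin d),
      Orthonormal ℝ v ∧ ¬ ContainsAP d m k ε v F) :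
    assouadDim F ≤ (d : ℝ) + (1/2) *
      (Real.log ((rPatch k m m ⌈Real.sqrt d / ε⌉₊ : ℝ) / (⌈Real.sqrt d / ε⌉₊ : ℝ) ^ m) /
        Real.log (⌈Real.sqrt d / ε⌉₊ : ℝ)) := by
  obtain ⟨v, hv, hAP⟩ := hF
  obtain ⟨b, hQ⟩ := exists_orthonormalBasis_not_containsAP_stdVec hv hmd hAP
  have hd : 0 < d := hm.trans hmd
  have hsd : (1 : ℝ) ≤ √d := Real.one_le_sqrt.2 (by exact_mod_cast hd)
  set N := ⌈√d / ε⌉₊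
  have hNε : √d ≤ ε * N := (div_le_iff₀' hε).1 (Nat.le_ceil _)
  have hN : (1 : ℝ) < N := by nlinarith
  have hN1 : 1 ≤ N := by exact_mod_cast hN.le
  have hrP : 1 ≤ rPatch k m m N := one_le_rPatch hm hk hN1
  calc assouadDim F ≤ Real.logb ((N : ℝ) ^ 2) ↑(rPatch k m m N * N ^ (2 * d - m)) := by
        refine assouadDim_le_of_coverNum_le_pow (one_lt_pow₀ hN two_ne_zero) (c := 2 * √d)
          (by linarith) (one_le_mul hrP (Nat.one_le_pow _ _ (by omega)))
          fun x _ r hr R p hp => ?_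
        set φ := b.repr.toIsometryEquiv
        rw [← coverNum_image φ, Set.image_inter φ.injective, φ.image_closedBall]
        exact coverNum_closedBall_inter_le_pow hd hmd (by omega) hNε hQ _ hr hp
    _ = _ := by
        push_cast
        exact logb_sq_mul_pow_eq hN (by exact_mod_cast hrP) (by omega)
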